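/- arXiv:1108.1823 — 2 statements merged into one kernel-verified Lean document; each statement's English description precedes it below -/
import Mathlib

section
/- Let R be a commutative ℚ-algebra, let k ≥ 2 be an integer, let a, b ∈ R, and let p, q be integers with 1 ≤ p ≤ k−1 and 0 ≤ q ≤ k. Then C(k−1−q+b, k−1) + ∑_{i=1}^{p} [ C(q+a+1, i)·C(k−1−q+b, k−1−i) − C(q+a, i−1)·C(k−q+b, k−i) ] = C(q+a, p)·C(k−1−q+b, k−1−p). (Equivalently, with B^k_{i,q} := A^k_{i,q}(a,b,c) − A^k_{i,q+1}(a,b,c): A^{k−1}_{0,q}(a,b,c) + ∑_{i=1}^{p} B^k_{i,q} = A^{k−1}_{p,q}(a,b,c).) -/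
/-- Generalized binomial coefficient `C(x, p) = (1/p!) ∏_{j=0}^{p-1} (x - j)`
in a commutative `ℚ`-algebra. -/
noncomputable def gchoose {R : Type*} [CommRing R] [Algebra ℚ R] (x : R) (p : ℕ) : R :=
  algebraMap ℚ R (1 / p.factorial) * ∏ j ∈ Finset.range p, (x - (j : R))

lemma gchoose_zero {R : Type*} [CommRing R] [Algebra ℚ R] (x : R) : gchoose x 0 = 1 := by
  simp [gchoose]

lemma gchoose_pascal {R : Type*} [CommRing R] [Algebra ℚ R] (x : R) (n : ℕ) :
    gchoose (x + 1) (n + 1) = gchoose x (n + 1) + gchoose x n := by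
  unfold gchoose
  rw [Finset.prod_range_succ' (fun j => x + 1 - (j : R)), Finset.prod_range_succ]
  have hP : ∏ j ∈ Finset.range n, (x + 1 - ((j + 1 : ℕ) : R))
      = ∏ j ∈ Finset.range n, (x - (j : R)) := by
    apply Finset.prod_congr rfl
    intro j _
    push_cast
    ring
  rw [hP]
  have hd : algebraMap ℚ R (1 / n.factorial)
      = ((n : R) + 1) * algebraMap ℚ R (1 / (n + 1).factorial) := by
    have : ((n : ℚ) + 1) * (1 / (n + 1).factorial) = 1 / n.factorial := by
      rw [Nat.factorial_succ]
      push_cast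
      field_simp
    rw [← this, map_mul]
    push_cast
    simp
  rw [hd]
  push_cast
  ring

/-- The telescoping identity
`A^{k-1}_{0,q} + ∑_{i=1}^{p} B^k_{i,q} = A^{k-1}_{p,q}` for `1 ≤ p ≤ k-1`, `0 ≤ q ≤ k`. -/
theorem matA_telescoping {R : Type*} [CommRing R] [Algebra ℚ R] (k : ℕ) (hk : 2 ≤ k)
    (a b : R) (p q : ℕ) (hp1 : 1 ≤ p) (hpk : p ≤ k - 1) (hq : q ≤ k) :
    gchoose ((k : R) - 1 - (q : R) + b) (k - 1)
      + ∑ i ∈ Finset.Icc 1 p,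
          (gchoose ((q : R) + a + 1) i * gchoose ((k : R) - 1 - (q : R) + b) (k - 1 - i)
            - gchoose ((q : R) + a) (i - 1) * gchoose ((k : R) - (q : R) + b) (k - i))
    = gchoose ((q : R) + a) p * gchoose ((k : R) - 1 - (q : R) + b) (k - 1 - p) := by
  set X : R := (q : R) + a with hX
  set y : R := (k : R) - 1 - (q : R) + b with hy
  set F : ℕ → R := fun i => gchoose X i * gchoose y (k - 1 - i) with hF
  have hsum : ∑ i ∈ Finset.Icc 1 p,
      (gchoose (X + 1) i * gchoose y (k - 1 - i)
        - gchoose X (i - 1) * gchoose ((k : R) - (q : R) + b) (k - i))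
      = ∑ i ∈ Finset.Icc 1 p, (F i - F (i - 1)) := by
    apply Finset.sum_congr rfl
    intro i hi
    simp only [Finset.mem_Icc] at hi
    obtain ⟨hi1, hi2⟩ := hi
    obtain ⟨m, rfl⟩ := Nat.exists_eq_add_of_le hi1
    -- i = 1 + m
    have hik : 1 + m ≤ k - 1 := le_trans hi2 hpk
    have hkm : k - (1 + m) = (k - 1 - (1 + m)) + 1 := by omega
    have hyx : (k : R) - (q : R) + b = y + 1 := by rw [hy]; ring
    have h1 : gchoose (X + 1) (1 + m) = gchoose X (1 + m) + gchoose X m := by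
      rw [Nat.add_comm 1 m, gchoose_pascal]
    have h2 : gchoose ((k : R) - (q : R) + b) (k - (1 + m))
        = gchoose y (k - (1 + m)) + gchoose y (k - 1 - (1 + m)) := by
      rw [hyx, hkm, gchoose_pascal]
    rw [h1, h2]
    have hm1 : 1 + m - 1 = m := by omega
    have hm2 : k - 1 - m = k - (1 + m) := by omega
    simp only [hF, hm1, hm2]
    ring
  have htel : ∀ n : ℕ, ∑ i ∈ Finset.Icc 1 n, (F i - F (i - 1)) = F n - F 0 := by
    intro n
    induction n with
    | zero => simp
    | succ m ih =>
      rw [Finset.sum_Icc_succ_top (by omega), ih]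
      simp
  have h0 : F 0 = gchoose y (k - 1) := by
    simp [hF, gchoose_zero]
  have hXp : (q : R) + a + 1 = X + 1 := by rw [hX]
  rw [hXp, hsum, htel, h0]
  simp only [hF]
  ring
end

section
/- Let R be a commutative ℚ-algebra, let k ≥ 1 be an integer and let a, b, c ∈ R. Then det A^k(a,b,c) = C(k+a+b, k) · det A^{k−1}(a,b,c). -/
/-- The `(k+2) × (k+2)` matrix `A^k(a,b,c)`: for `0 ≤ p ≤ k` the `(p,q)` entry is
`C(q+a, p) * C(k-q+b, k-p)`, and the `(k+1, q)` entry is `C(q+c, k+1)`. -/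
noncomputable def matA {R : Type*} [CommRing R] [Algebra ℚ R] (k : ℕ) (a b c : R) :
    Matrix (Fin (k + 2)) (Fin (k + 2)) R :=
  fun p q =>
    if (p : ℕ) ≤ k then
      gchoose ((q : ℕ) + a) (p : ℕ) * gchoose ((k : R) - (q : ℕ) + b) (k - (p : ℕ))
    else
      gchoose ((q : ℕ) + c) (k + 1)

open Finset Polynomial Matrix

theorem Polynomial.natDegree_descPochhammer_le {R : Type*} [Ring R] (p : ℕ) :
    (descPochhammer R p).natDegree ≤ p := by
  rw [← descPochhammer_map (Int.castRingHom R)]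
  exact natDegree_map_le.trans (descPochhammer_natDegree ℤ p).le

section gchoose

variable {R : Type*} [CommRing R] [Algebra ℚ R]

theorem gchoose_eq_eval (x : R) (p : ℕ) :
    gchoose x p = (C (algebraMap ℚ R (1 / p.factorial)) * descPochhammer R p).eval x := by
  rw [eval_mul, eval_C, descPochhammer_eval_eq_prod_range, gchoose]

-- `Ring.choose` comes from the `BinomialRing` instance of `ℚ≥0`-modules.
noncomputable local instance : Module ℚ≥0 R := Module.compHom R NNRat.coeHom

theorem gchoose_eq_ringChoose (x : R) (p : ℕ) : gchoose x p = Ring.choose x p := by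
  have h := Ring.descPochhammer_eq_factorial_smul_choose x p
  rw [← aeval_eq_smeval, aeval_def, eval₂_eq_eval_map, descPochhammer_map, nsmul_eq_mul] at h
  rw [gchoose_eq_eval, eval_mul, eval_C, h, ← mul_assoc, ← map_natCast (algebraMap ℚ R),
    ← map_mul, one_div, inv_mul_cancel₀ (by exact_mod_cast p.factorial_ne_zero), map_one, one_mul]

@[simp] theorem gchoose_zero_right (x : R) : gchoose x 0 = 1 := by
  simp [gchoose]

theorem gchoose_succ_succ (x : R) (p : ℕ) :
    gchoose (x + 1) (p + 1) = gchoose x p + gchoose x (p + 1) := by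
  simp only [gchoose_eq_ringChoose, Ring.choose_succ_succ]

theorem gchoose_add (x y : R) (n : ℕ) :
    gchoose (x + y) n = ∑ p ∈ range (n + 1), gchoose x p * gchoose y (n - p) := by
  simp only [gchoose_eq_ringChoose]
  rw [Ring.add_choose_eq n (Commute.all x y), Nat.sum_antidiagonal_eq_sum_range_succ_mk]

theorem gchoose_succ_mul_gchoose_sub (u v : R) (p n : ℕ) :
    gchoose (u + 1) (p + 1) * gchoose v (n + 1) - gchoose u (p + 1) * gchoose (v + 1) (n + 1) =
      gchoose u p * gchoose v (n + 1) - gchoose u (p + 1) * gchoose v n := by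
  rw [gchoose_succ_succ u, gchoose_succ_succ v]
  ring

end gchoose

namespace Matrix

variable {R : Type*} [CommRing R]

theorem det_mul_eq_det_submatrix_of_mulVec_eq_single {n : ℕ}
    (A : Matrix (Fin (n + 1)) (Fin (n + 1)) R) (w : Fin (n + 1) → R) (i : Fin (n + 1))
    (h : A *ᵥ w = Pi.single i 1) :
    A.det * w i = (A.submatrix i.succAbove i.succAbove).det := by
  calc A.det * w i = ((A.adjugate * A) *ᵥ w) i := by
        rw [adjugate_mul, smul_mulVec, one_mulVec, Pi.smul_apply, smul_eq_mul]
    _ = A.adjugate i i := by rw [← mulVec_mulVec, h, mulVec_single_one, col_apply]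
    _ = _ := by rw [adjugate_fin_succ_eq_det_submatrix, Even.neg_one_pow ⟨i, rfl⟩, one_mul]

theorem det_eq_of_forall_row_eq_smul_add_succ {n : ℕ}
    {A B : Matrix (Fin (n + 1)) (Fin (n + 1)) R} (c : Fin n → R)
    (A_last : ∀ j, A (Fin.last n) j = B (Fin.last n) j)
    (A_castSucc : ∀ (i : Fin n) (j), A i.castSucc j = B i.castSucc j + c i * A i.succ j) :
    det A = det B := by
  have h := det_eq_of_forall_row_eq_smul_add_pred (A := A.submatrix Fin.rev id)
    (B := B.submatrix Fin.rev id) (c ∘ Fin.rev) (fun j => A_last j) fun i j => by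
      simpa [Fin.rev_succ, Fin.rev_castSucc] using A_castSucc i.rev j
  have hA : (A.submatrix Fin.rev id).det = _ := det_permute Fin.revPerm A
  have hB : (B.submatrix Fin.rev id).det = _ := det_permute Fin.revPerm B
  rw [hA, hB] at h
  exact (Units.isUnit _).map (Int.castRingHom R) |>.mul_left_cancel h

theorem det_eq_det_sub_of_row_zero_eq_one {n : ℕ} (N : Matrix (Fin (n + 1)) (Fin (n + 1)) R)
    (h : ∀ j, N 0 j = 1) :
    N.det = (of fun i j : Fin n => N i.succ j.succ - N i.succ j.castSucc).det := by
  let B : Matrix (Fin (n + 1)) (Fin (n + 1)) R :=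
    of fun i => Fin.cases (N i 0) fun j => N i j.succ - N i j.castSucc
  have hNB : N.det = B.det :=
    det_eq_of_forall_col_eq_smul_add_pred (fun _ => 1) (fun _ => rfl) fun i j => by
      simp [B]
  rw [hNB, det_succ_row_zero, Fin.sum_univ_succ, Finset.sum_eq_zero fun j _ => by simp [B, h]]
  simp [B, h]
  rfl

end Matrix

section fwdDiff

open fwdDiff

variable {R : Type*} [CommRing R]

def fwdDiffCoeffs (n : ℕ) : Fin (n + 1) → R :=
  fun q => (((-1 : ℤ) ^ (n - q) * n.choose q : ℤ) : R)

theorem fwdDiffCoeffs_last (n : ℕ) : fwdDiffCoeffs n (Fin.last n) = (1 : R) := by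
  simp [fwdDiffCoeffs]

theorem dotProduct_fwdDiffCoeffs (f : R → R) (n : ℕ) :
    (fun q : Fin (n + 1) => f ((q : ℕ) : R)) ⬝ᵥ fwdDiffCoeffs n = (Δ_[1])^[n] f 0 := by
  simp only [fwdDiff_iter_eq_sum_shift, dotProduct, fwdDiffCoeffs]
  rw [Fin.sum_univ_eq_sum_range (fun q => f q * (((-1 : ℤ) ^ (n - q) * n.choose q : ℤ) : R))]
  refine Finset.sum_congr rfl fun q _ => ?_
  rw [zsmul_eq_mul, mul_comm]
  simp

variable [Algebra ℚ R]

theorem fwdDiff_gchoose_add (c : R) (p : ℕ) :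
    Δ_[1] (fun x => gchoose (x + c) (p + 1)) = fun x => gchoose (x + c) p := by
  funext x
  rw [fwdDiff, add_right_comm, gchoose_succ_succ, add_sub_cancel_right]

theorem fwdDiff_iter_gchoose_add (c : R) (p j : ℕ) :
    (Δ_[1])^[j] (fun x => gchoose (x + c) (p + j)) = fun x => gchoose (x + c) p := by
  induction j with
  | zero => rfl
  | succ j ih => rw [Function.iterate_succ_apply, ← add_assoc, fwdDiff_gchoose_add, ih]

theorem fwdDiff_iter_gchoose_mul_gchoose (a b : R) {k p : ℕ} (hp : p ≤ k) :
    (Δ_[1])^[k + 1] (fun x => gchoose (x + a) p * gchoose (k - x + b) (k - p)) = 0 := by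
  let P : ℕ → R[X] := fun p => C (algebraMap ℚ R (1 / p.factorial)) * descPochhammer R p
  have hP : ∀ p, (P p).natDegree ≤ p := fun p =>
    (natDegree_C_mul_le _ _).trans (natDegree_descPochhammer_le p)
  let Q := (P p).comp (X + C a) * (P (k - p)).comp (C ((k : R) + b) - X)
  have hQ : (fun x => gchoose (x + a) p * gchoose (k - x + b) (k - p)) = Q.eval := by
    funext x
    simp only [Q, P, gchoose_eq_eval, eval_mul, eval_comp, eval_add, eval_sub, eval_X, eval_C]
    ring_nf
  have hdeg : Q.natDegree ≤ k := calc
    Q.natDegree ≤ p * 1 + (k - p) * 1 := by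
      refine (natDegree_mul_le).trans (add_le_add ?_ ?_) <;>
        refine natDegree_comp_le.trans (Nat.mul_le_mul (hP _) ?_)
      · exact (natDegree_add_le _ _).trans (by simp [natDegree_X_le])
      · exact (natDegree_sub_le _ _).trans (by simp [natDegree_X_le])
    _ = k := by omega
  rw [hQ]
  exact fwdDiff_iter_eq_zero_of_degree_lt (Nat.lt_succ_of_le hdeg)

end fwdDiff

section matA

open fwdDiff

variable {R : Type*} [CommRing R] [Algebra ℚ R]

noncomputable def matM (k : ℕ) (a b : R) : Matrix (Fin (k + 1)) (Fin (k + 1)) R :=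
  of fun p q => gchoose ((q : ℕ) + a) p * gchoose ((k : R) - (q : ℕ) + b) (k - p)

theorem matA_submatrix_castSucc (k : ℕ) (a b c : R) :
    (matA k a b c).submatrix Fin.castSucc Fin.castSucc = matM k a b := by
  ext p q
  simp [matA, matM, Nat.le_of_lt_succ p.isLt]

theorem matA_mulVec_fwdDiffCoeffs (k : ℕ) (a b c : R) :
    matA k a b c *ᵥ fwdDiffCoeffs (k + 1) = Pi.single (Fin.last (k + 1)) 1 := by
  ext p
  rw [mulVec]
  by_cases hp : (p : ℕ) ≤ k
  · have hne : p ≠ Fin.last (k + 1) := fun h => by simp [h] at hp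
    calc (fun q => matA k a b c p q) ⬝ᵥ fwdDiffCoeffs (k + 1)
        = (Δ_[1])^[k + 1] (fun x => gchoose (x + a) p * gchoose (k - x + b) (k - p)) 0 := by
          rw [← dotProduct_fwdDiffCoeffs]
          simp [matA, hp]
      _ = (Pi.single (Fin.last (k + 1)) 1 : Fin (k + 2) → R) p := by
          rw [fwdDiff_iter_gchoose_mul_gchoose a b hp, Pi.single_eq_of_ne hne, Pi.zero_apply]
  · obtain rfl : p = Fin.last (k + 1) := Fin.ext (by have := p.isLt; simp; omega)
    calc (fun q => matA k a b c (Fin.last (k + 1)) q) ⬝ᵥ fwdDiffCoeffs (k + 1)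
        = (Δ_[1])^[k + 1] (fun x => gchoose (x + c) (0 + (k + 1))) 0 := by
          rw [← dotProduct_fwdDiffCoeffs]
          simp [matA]
      _ = (Pi.single (Fin.last (k + 1)) 1 : Fin (k + 2) → R) (Fin.last (k + 1)) := by
          rw [fwdDiff_iter_gchoose_add, Pi.single_eq_same]
          exact gchoose_zero_right _

theorem det_matA (k : ℕ) (a b c : R) : (matA k a b c).det = (matM k a b).det := by
  have h := det_mul_eq_det_submatrix_of_mulVec_eq_single _ _ _ (matA_mulVec_fwdDiffCoeffs k a b c)
  rwa [fwdDiffCoeffs_last, mul_one, Fin.succAbove_last, matA_submatrix_castSucc] at h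

end matA

section matM

variable {R : Type*} [CommRing R] [Algebra ℚ R]

theorem sum_matM_apply (k : ℕ) (a b : R) (q : Fin (k + 1)) :
    ∑ p, matM k a b p q = gchoose ((k : R) + a + b) k := by
  rw [show (k : R) + a + b = ((q : ℕ) + a) + (k - (q : ℕ) + b) by ring, gchoose_add,
    ← Fin.sum_univ_eq_sum_range
      (fun p => gchoose ((q : ℕ) + a) p * gchoose (k - (q : ℕ) + b) (k - p))]
  rfl

theorem matM_succ_sub (m : ℕ) (a b : R) (p q : Fin (m + 1)) :
    matM (m + 1) a b p.succ q.succ - matM (m + 1) a b p.succ q.castSucc =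
      gchoose ((q : ℕ) + a + 1) (p + 1) * gchoose ((m : R) - (q : ℕ) + b) (m - p) -
        gchoose ((q : ℕ) + a) (p + 1) * gchoose ((m : R) - (q : ℕ) + b + 1) (m - p) := by
  simp only [matM, of_apply, Fin.val_succ, Fin.val_castSucc, Nat.add_sub_add_right]
  congr 3 <;> push_cast <;> ring

theorem matM_succ_sub_last (m : ℕ) (a b : R) (q : Fin (m + 1)) :
    matM (m + 1) a b (Fin.last m).succ q.succ - matM (m + 1) a b (Fin.last m).succ q.castSucc =
      matM m a b (Fin.last m) q := by
  rw [matM_succ_sub]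
  simp [matM, gchoose_succ_succ]

theorem matM_succ_sub_castSucc (m : ℕ) (a b : R) (i : Fin m) (q : Fin (m + 1)) :
    matM (m + 1) a b i.castSucc.succ q.succ - matM (m + 1) a b i.castSucc.succ q.castSucc =
      matM m a b i.castSucc q - matM m a b i.succ q := by
  obtain ⟨n, hn⟩ : ∃ n, m - i = n + 1 := ⟨m - i - 1, by omega⟩
  rw [matM_succ_sub]
  simp only [matM, of_apply, Fin.val_castSucc, Fin.val_succ, hn, gchoose_succ_mul_gchoose_sub]
  rw [show m - (i + 1) = n by omega]

theorem det_matM_succ (m : ℕ) (a b : R) :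
    (matM (m + 1) a b).det = gchoose (((m + 1 : ℕ) : R) + a + b) (m + 1) * (matM m a b).det := by
  set M := matM (m + 1) a b
  have hsum : ∑ p, (1 : R) • M p = gchoose (((m + 1 : ℕ) : R) + a + b) (m + 1) • fun _ => 1 := by
    funext q
    simp only [one_smul, Pi.smul_apply, smul_eq_mul, mul_one]
    exact (Finset.sum_apply q _ _).trans (sum_matM_apply (m + 1) a b q)
  calc M.det = (M.updateRow 0 (∑ p, (1 : R) • M p)).det := by rw [det_updateRow_sum, one_smul]
    _ = gchoose (((m + 1 : ℕ) : R) + a + b) (m + 1) * (M.updateRow 0 fun _ => 1).det := by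
        rw [hsum, det_updateRow_smul]
    _ = gchoose (((m + 1 : ℕ) : R) + a + b) (m + 1) *
          (of fun i j : Fin (m + 1) => M i.succ j.succ - M i.succ j.castSucc).det := by
        rw [det_eq_det_sub_of_row_zero_eq_one _ fun j => by simp]
        simp only [updateRow_ne (Fin.succ_ne_zero _)]
    _ = _ := by
        congr 1
        refine (det_eq_of_forall_row_eq_smul_add_succ (fun _ => 1) (fun j => ?_) fun i j => ?_).symm
        · rw [of_apply, matM_succ_sub_last]
        · rw [of_apply, matM_succ_sub_castSucc]
          ring

end matM

/-- The recursion `det A^k(a,b,c) = C(k+a+b, k) · det A^{k-1}(a,b,c)` for `k ≥ 1`. -/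
theorem det_matA_rec {R : Type*} [CommRing R] [Algebra ℚ R] (k : ℕ) (hk : 1 ≤ k)
    (a b c : R) :
    (matA k a b c).det = gchoose ((k : R) + a + b) k * (matA (k - 1) a b c).det := by
  obtain ⟨m, rfl⟩ : ∃ m, k = m + 1 := ⟨k - 1, by omega⟩
  rw [det_matA, det_matA, Nat.add_sub_cancel, det_matM_succ]
end
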